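/- Let F be a field of characteristic p > 0 and h ∈ F[x] nonzero, with A_h ⊆ A₁ via ŷ = yh. Then the centralizer of x in A_h equals F[x, hᵖyᵖ] = ⊕_{i ≡ 0 mod p} F[x]·hⁱyⁱ. -/

import Mathlib

open Polynomial FreeAlgebra

/-- The defining relation of the Weyl algebra: `y * x = x * y + 1`. -/
inductive weylRel (F : Type) [Field F] : FreeAlgebra F (Fin 2) → FreeAlgebra F (Fin 2) → Prop
  | rel : weylRel F (ι F 1 * ι F 0) (ι F 0 * ι F 1 + 1)

/-- The Weyl algebra `A₁` over `F`. -/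
noncomputable abbrev Weyl (F : Type) [Field F] := RingQuot (weylRel F)

/-- The generator `x` of the Weyl algebra. -/
noncomputable def wX (F : Type) [Field F] : Weyl F := RingQuot.mkAlgHom F (weylRel F) (ι F 0)

/-- The generator `y` of the Weyl algebra. -/
noncomputable def wY (F : Type) [Field F] : Weyl F := RingQuot.mkAlgHom F (weylRel F) (ι F 1)

/-- The subalgebra `A_h = F⟨x, yh⟩` of the Weyl algebra. -/
noncomputable def Ahsub (F : Type) [Field F] (h : F[X]) : Subalgebra F (Weyl F) :=
  Algebra.adjoin F {wX F, wY F * aeval (wX F) h}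

noncomputable section

variable (F : Type) [Field F]

abbrev MM (F : Type) [Field F] := Polynomial (Polynomial F)

def DmapFun (q : MM F) : MM F := ⟨AddMonoidAlgebra.ofCoeff (Finsupp.mapRange (⇑(derivative (R := F))) derivative_zero q.toFinsupp.coeff)⟩

lemma coeff_DmapFun (q : MM F) (n : ℕ) : (DmapFun F q).coeff n = derivative (q.coeff n) := rfl

/-- coefficientwise derivative (in the inner variable x) -/
def Dmap : MM F →ₗ[F] MM F where
  toFun := DmapFun F
  map_add' a b := by ext n; simp [coeff_DmapFun, coeff_add]
  map_smul' t a := by ext n; simp [coeff_DmapFun, coeff_smul]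

lemma coeff_Dmap (q : MM F) (n : ℕ) : (Dmap F q).coeff n = derivative (q.coeff n) := rfl

def eop : Module.End F (MM F) := Algebra.lmul F (MM F) (C X)

def fop : Module.End F (MM F) := Dmap F + Algebra.lmul F (MM F) X

lemma eop_apply (m : MM F) : eop F m = C X * m := rfl
lemma fop_apply (m : MM F) : fop F m = Dmap F m + X * m := rfl

lemma weyl_rel_End : fop F * eop F = eop F * fop F + 1 := by
  ext m : 1
  show fop F (eop F m) = eop F (fop F m) + m
  rw [eop_apply, fop_apply, fop_apply, eop_apply]
  have hD : Dmap F (C X * m) = C X * Dmap F m + m := by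
    ext n
    simp [coeff_Dmap, coeff_C_mul, derivative_mul]
    ring
  rw [hD]; ring

lemma fop_pow_one (j : ℕ) : (fop F ^ j) 1 = (X : MM F) ^ j := by
  induction j with
  | zero => simp
  | succ k ih =>
    rw [pow_succ', Module.End.mul_apply, ih, fop_apply]
    have : Dmap F ((X : MM F) ^ k) = 0 := by
      ext n
      simp [coeff_Dmap, coeff_X_pow]
      split <;> simp
    rw [this]; ring

/-- The representation of the Weyl algebra on `F[x][y]`. -/
def Phi : Weyl F →ₐ[F] Module.End F (MM F) :=
  RingQuot.liftAlgHom F ⟨FreeAlgebra.lift F ![eop F, fop F], by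
    rintro a b ⟨⟩
    simp only [map_mul, map_add, map_one, FreeAlgebra.lift_ι_apply]
    show fop F * eop F = eop F * fop F + 1
    exact weyl_rel_End F⟩

lemma Phi_wX : Phi F (wX F) = eop F := by
  rw [wX, Phi, RingQuot.liftAlgHom_mkAlgHom_apply, FreeAlgebra.lift_ι_apply]
  rfl

lemma Phi_wY : Phi F (wY F) = fop F := by
  rw [wY, Phi, RingQuot.liftAlgHom_mkAlgHom_apply, FreeAlgebra.lift_ι_apply]
  rfl

/-- evaluation at 1 -/
def evL : Weyl F →ₗ[F] MM F :=
  (LinearMap.applyₗ (1 : MM F)).comp (Phi F).toLinearMap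

lemma evL_apply (a : Weyl F) : evL F a = Phi F a 1 := rfl

lemma evL_monomial (g : F[X]) (j : ℕ) :
    evL F (aeval (wX F) g * wY F ^ j) = C g * X ^ j := by
  rw [evL_apply, map_mul, map_pow, Phi_wY, Module.End.mul_apply, fop_pow_one]
  have h1 : Phi F (aeval (wX F) g) = Algebra.lmul F (MM F) (C g) := by
    rw [← Polynomial.aeval_algHom_apply, Phi_wX, eop,
      Polynomial.aeval_algHom_apply (Algebra.lmul F (MM F)) (C X) g]
    congr 1
    have : (C X : MM F) = algebraMap (Polynomial F) (MM F) X := rfl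
    rw [this, Polynomial.aeval_algebraMap_apply, Polynomial.aeval_X_left_apply]
    rfl
  rw [h1]
  rfl

/-- linear independence: the standard monomials `g(x) yʲ` are independent. -/
lemma indep (c : ℕ →₀ F[X])
    (hc : (c.sum fun i g => aeval (wX F) g * wY F ^ i) = 0) : c = 0 := by
  have h0 : evL F (c.sum fun i g => aeval (wX F) g * wY F ^ i) = 0 := by rw [hc]; simp
  rw [map_finsuppSum] at h0
  simp only [evL_monomial] at h0
  have hq : (⟨AddMonoidAlgebra.ofCoeff c⟩ : MM F) = 0 := by
    have hs : (⟨AddMonoidAlgebra.ofCoeff c⟩ : MM F).sum (fun n a => C a * X ^ n) = c.sum fun a b => C b * X ^ a := rfl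
    rw [← Polynomial.sum_C_mul_X_pow_eq (⟨AddMonoidAlgebra.ofCoeff c⟩ : MM F), hs, h0]
  have := congrArg Polynomial.toFinsupp hq
  simpa using this

end

section WeylComm

variable (F : Type) [Field F]

lemma rel1 : wY F * wX F = wX F * wY F + 1 := by
  have := RingQuot.mkAlgHom_rel F (weylRel.rel (F := F))
  rw [map_mul, map_add, map_mul, map_one] at this
  exact this

lemma comm_aeval (g : Polynomial F) :
    wY F * aeval (wX F) g = aeval (wX F) g * wY F + aeval (wX F) (derivative g) := by
  refine Polynomial.induction_on g ?_ ?_ ?_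
  · intro a
    rw [aeval_C, derivative_C, map_zero, add_zero, Algebra.commutes]
  · intro P Q hP hQ
    rw [map_add, derivative_add, map_add, mul_add, hP, hQ]
    noncomm_ring
  · intro n a ih
    have hd : aeval (wX F) (C a * X ^ (n + 1)) = aeval (wX F) (C a * X ^ n) * wX F := by
      rw [show (C a * X ^ (n + 1) : F[X]) = (C a * X ^ n) * X by ring, map_mul, aeval_X]
    have hd2 : aeval (wX F) (derivative (C a * X ^ (n + 1))) =
        aeval (wX F) (derivative (C a * X ^ n)) * wX F + aeval (wX F) (C a * X ^ n) := by
      rw [show (C a * X ^ (n + 1) : F[X]) = (C a * X ^ n) * X by ring, derivative_mul,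
        derivative_X, mul_one, map_add, map_mul, aeval_X]
    rw [hd, hd2, ← mul_assoc, ih, add_mul, mul_assoc _ (wY F) (wX F), rel1]
    noncomm_ring
  
lemma x_commute_aeval (g : Polynomial F) : Commute (wX F) (aeval (wX F) g) := by
  have : Commute (X : Polynomial F) g := Commute.all _ _
  simpa [aeval_X] using this.map (aeval (wX F))

lemma yn_x (n : ℕ) : wY F ^ (n + 1) * wX F = wX F * wY F ^ (n + 1) + (n + 1) • wY F ^ n := by
  induction n with
  | zero => simpa using rel1 F
  | succ k ih =>
    have h1 : wY F ^ (k + 2) * wX F = wY F * (wY F ^ (k + 1) * wX F) := by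
      rw [pow_succ', mul_assoc]
    rw [h1, ih, mul_add, ← mul_assoc, rel1, mul_smul_comm, ← pow_succ']
    rw [add_mul, one_mul, mul_assoc, ← pow_succ']
    rw [succ_nsmul (wY F ^ (k + 1)) (k + 1)]
    abel

end WeylComm

section CharStuff

variable (F : Type) [Field F] (p : ℕ) [Fact p.Prime] [CharP F p]

lemma p_smul_zero (a : Weyl F) : p • a = 0 := by
  rw [nsmul_eq_mul]
  have h1 : ((p : ℕ) : Weyl F) = algebraMap F (Weyl F) ((p : ℕ) : F) :=
    (map_natCast (algebraMap F (Weyl F)) p).symm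
  rw [h1, CharP.cast_eq_zero F p, map_zero, zero_mul]

lemma yp_x : wY F ^ p * wX F = wX F * wY F ^ p := by
  obtain ⟨k, hk⟩ : ∃ k, p = k + 1 := ⟨p - 1, (Nat.succ_pred_eq_of_pos (Fact.out (p := p.Prime)).pos).symm⟩
  have h2 := yn_x F k
  rw [← hk] at h2
  rw [h2, p_smul_zero F p (wY F ^ k), add_zero]

lemma yp_commute_aeval (g : Polynomial F) : Commute (wY F ^ p) (aeval (wX F) g) := by
  refine Polynomial.induction_on g ?_ ?_ ?_
  · intro a
    rw [aeval_C]
    exact (Algebra.commutes a (wY F ^ p)).symm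
  · intro P Q hP hQ
    rw [map_add]
    exact hP.add_right hQ
  · intro n a ih
    have hd : aeval (wX F) (C a * X ^ (n + 1)) = aeval (wX F) (C a * X ^ n) * wX F := by
      rw [show (C a * X ^ (n + 1) : Polynomial F) = (C a * X ^ n) * X by ring, map_mul, aeval_X]
    rw [hd]
    exact ih.mul_right (yp_x F p)

end CharStuff

section AhStruct

variable (F : Type) [Field F] (h : Polynomial F)

noncomputable def phiMap (i : ℕ) : Polynomial F →ₗ[F] Weyl F :=
  (LinearMap.mulRight F (wY F ^ i)).comp
    ((aeval (wX F)).toLinearMap.comp (LinearMap.mulRight F (h ^ i)))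

lemma phiMap_apply (i : ℕ) (r : Polynomial F) :
    phiMap F h i r = aeval (wX F) (r * h ^ i) * wY F ^ i := rfl

noncomputable def Psi : (ℕ →₀ Polynomial F) →ₗ[F] Weyl F := Finsupp.lsum F (phiMap F h)

lemma Psi_single (i : ℕ) (r : Polynomial F) : Psi F h (Finsupp.single i r) = phiMap F h i r := by
  simp [Psi]

lemma aeval_mem_Ahsub (g : Polynomial F) : aeval (wX F) g ∈ Ahsub F h := by
  have h1 : aeval (wX F) g ∈ Algebra.adjoin F {wX F} := by
    rw [Algebra.adjoin_singleton_eq_range_aeval]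
    exact ⟨g, rfl⟩
  exact Algebra.adjoin_mono (Set.singleton_subset_iff.mpr (Set.mem_insert _ _)) h1

lemma yhat_mem : wY F * aeval (wX F) h ∈ Ahsub F h :=
  Algebra.subset_adjoin (Set.mem_insert_of_mem _ rfl)

lemma wX_mem : wX F ∈ Ahsub F h := Algebra.subset_adjoin (Set.mem_insert _ _)

lemma yhat_mul (i : ℕ) (r : Polynomial F) :
    (wY F * aeval (wX F) h) * phiMap F h i r =
      phiMap F h (i + 1) r + phiMap F h i (derivative r * h + C ((i : F) + 1) * (r * derivative h)) := by
  have e1 : (wY F * aeval (wX F) h) * phiMap F h i r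
      = wY F * aeval (wX F) (r * h ^ (i + 1)) * wY F ^ i := by
    rw [phiMap_apply, ← mul_assoc, mul_assoc (wY F), ← map_mul]
    congr 2
    ring
  have e2 : derivative (r * h ^ (i + 1)) =
      (derivative r * h + C ((i : F) + 1) * (r * derivative h)) * h ^ i := by
    rw [derivative_mul, derivative_pow]
    push_cast
    ring
  rw [e1, comm_aeval, add_mul, phiMap_apply, phiMap_apply, e2, map_mul, map_mul]
  rw [mul_assoc, ← pow_succ']

lemma wX_mul (i : ℕ) (r : Polynomial F) :
    wX F * phiMap F h i r = phiMap F h i (X * r) := by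
  rw [phiMap_apply, phiMap_apply, ← mul_assoc]
  congr 1
  conv_rhs => rw [mul_assoc, map_mul, aeval_X]


lemma mem_range_Psi {a : Weyl F} (ha : a ∈ Ahsub F h) : ∃ c, a = Psi F h c := by
  have hspan : a ∈ Submodule.span F ↑(Submonoid.closure {wX F, wY F * aeval (wX F) h}) := by
    rw [← Algebra.adjoin_eq_span]
    exact ha
  have hle : Submodule.span F ↑(Submonoid.closure {wX F, wY F * aeval (wX F) h})
      ≤ LinearMap.range (Psi F h) := by
    rw [Submodule.span_le]
    intro m hm
    induction hm using Submonoid.closure_induction_left with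
    | one =>
      refine ⟨Finsupp.single 0 1, ?_⟩
      rw [Psi_single, phiMap_apply]
      simp
    | mul_left g hg b hb ih =>
      obtain ⟨c, hc⟩ := ih
      have hsum : g * b = c.sum fun i r => g * phiMap F h i r := by
        rw [← hc, Psi, Finsupp.lsum_apply]
        exact Finsupp.mul_sum _ _
      rw [hsum]
      rw [SetLike.mem_coe]
      refine Submodule.finsuppSum_mem F (LinearMap.range (Psi F h)) c _ ?_
      intro i hi
      rcases hg with rfl | hg'
      · rw [wX_mul]
        exact ⟨Finsupp.single i (X * c i), Psi_single F h i _⟩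
      · rw [Set.mem_singleton_iff] at hg'
        subst hg'
        rw [yhat_mul]
        exact add_mem ⟨Finsupp.single (i + 1) (c i), Psi_single F h _ _⟩
          ⟨Finsupp.single i _, Psi_single F h i _⟩
  obtain ⟨c, hc⟩ := hle hspan
  exact ⟨c, hc.symm⟩

end AhStruct

section Hard

variable (F : Type) [Field F] (p : ℕ) [Fact p.Prime] [CharP F p] (h : Polynomial F)

lemma term_comm (g : Polynomial F) (i : ℕ) :
    (aeval (wX F) g * wY F ^ i) * wX F - wX F * (aeval (wX F) g * wY F ^ i)
      = i • (aeval (wX F) g * wY F ^ (i - 1)) := by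
  cases i with
  | zero =>
    rw [pow_zero, mul_one, zero_smul, sub_eq_zero]
    exact (x_commute_aeval F g).eq.symm
  | succ k =>
    rw [mul_assoc, yn_x F k, mul_add, ← mul_assoc, ← (x_commute_aeval F g).eq, mul_assoc,
      mul_smul_comm, Nat.add_sub_cancel]
    abel

lemma hpyp_pow (i : ℕ) :
    (aeval (wX F) h ^ p * wY F ^ p) ^ i = aeval (wX F) h ^ (p * i) * wY F ^ (p * i) := by
  induction i with
  | zero => simp
  | succ k ih =>
    have hcomm : Commute (wY F ^ (p * k)) (aeval (wX F) h ^ p) := by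
      rw [pow_mul, ← map_pow]
      exact (yp_commute_aeval F p (h ^ p)).pow_left k
    rw [pow_succ, ih, mul_assoc, ← mul_assoc (wY F ^ (p * k)), hcomm.eq, mul_assoc,
      ← pow_add, ← mul_assoc, ← pow_add]
    rw [show p * k + p = p * (k + 1) by ring]

lemma hard {a : Weyl F} (ha : a ∈ Ahsub F h) (hh : h ≠ 0) (hcom : a * wX F = wX F * a) :
    a ∈ Submodule.span F {z : Weyl F | ∃ (i : ℕ) (r : Polynomial F),
        z = aeval (wX F) r * (aeval (wX F) h ^ (p * i) * wY F ^ (p * i))} := by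
  obtain ⟨c, rfl⟩ := mem_range_Psi F h ha
  have key : ∀ i ∈ c.support, p ∣ i := by
    intro i0 hi0
    by_contra hnd
    have hi0ne : i0 ≠ 0 := fun h0 => hnd (h0 ▸ dvd_zero p)
    -- the commutator vanishes, expand it
    have hz : (∑ i ∈ c.support, i • (aeval (wX F) (c i * h ^ i) * wY F ^ (i - 1))) = 0 := by
      have e1 : Psi F h c * wX F - wX F * Psi F h c
          = ∑ i ∈ c.support, i • (aeval (wX F) (c i * h ^ i) * wY F ^ (i - 1)) := by
        rw [Psi, Finsupp.lsum_apply, Finsupp.sum, Finset.sum_mul, Finset.mul_sum,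
          ← Finset.sum_sub_distrib]
        refine Finset.sum_congr rfl fun i _ => ?_
        rw [phiMap_apply]
        exact term_comm F (c i * h ^ i) i
      rw [hcom, sub_self] at e1
      exact e1.symm
    -- push through the representation
    have hz2 : (∑ i ∈ c.support, i • ((C (c i * h ^ i) : MM F) * X ^ (i - 1))) = 0 := by
      have h2 := congrArg (evL F) hz
      rw [map_sum, map_zero] at h2
      simpa only [map_nsmul, evL_monomial] using h2
    -- extract the coefficient at i0 - 1
    have hc3 := congrArg (fun q : MM F => q.coeff (i0 - 1)) hz2
    simp only [Polynomial.finset_sum_coeff, Polynomial.coeff_smul, coeff_C_mul, coeff_X_pow,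
      Polynomial.coeff_zero] at hc3
    rw [Finset.sum_eq_single i0] at hc3
    · rw [if_pos rfl, mul_one, nsmul_eq_mul,
        show ((i0 : ℕ) : Polynomial F) = C ((i0 : ℕ) : F) from (Polynomial.C_eq_natCast _).symm] at hc3
      rcases mul_eq_zero.mp hc3 with h1 | h2
      · exact hnd ((CharP.cast_eq_zero_iff F p i0).mp (Polynomial.C_eq_zero.mp h1))
      · rcases mul_eq_zero.mp h2 with h3 | h4
        · exact (Finsupp.mem_support_iff.mp hi0) h3
        · exact pow_ne_zero i0 hh h4
    · intro b hb hbne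
      rcases Nat.eq_zero_or_pos b with rfl | hbpos
      · simp
      · have : ¬ (i0 - 1 = b - 1) := by
          intro hEq
          exact hbne (by omega)
        simp [this]
    · intro hn; exact absurd hi0 hn
  -- now rewrite a as an element of the span
  rw [Psi, Finsupp.lsum_apply]
  refine Submodule.finsuppSum_mem F _ c _ ?_
  intro i hi
  obtain ⟨j, hj⟩ := key i (Finsupp.mem_support_iff.mpr hi)
  refine Submodule.subset_span ⟨j, c i, ?_⟩
  rw [phiMap_apply, map_mul, map_pow, mul_assoc, hj]

end Hard

section Easy

variable (F : Type) [Field F] (p : ℕ) [Fact p.Prime] [CharP F p] (h : Polynomial F)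

lemma phiMap_mem (i : ℕ) : ∀ r, phiMap F h i r ∈ Ahsub F h := by
  induction i with
  | zero =>
    intro r
    rw [phiMap_apply]
    simpa using aeval_mem_Ahsub F h r
  | succ k ih =>
    intro r
    have e : phiMap F h (k + 1) r = (wY F * aeval (wX F) h) * phiMap F h k r
        - phiMap F h k (derivative r * h + C ((k : F) + 1) * (r * derivative h)) := by
      rw [yhat_mul, add_sub_cancel_right]
    rw [e]
    exact sub_mem (mul_mem (yhat_mem F h) (ih r)) (ih _)

lemma hpyp_mem : aeval (wX F) h ^ p * wY F ^ p ∈ Ahsub F h := by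
  have h1 := phiMap_mem F h p 1
  rw [phiMap_apply, one_mul, map_pow] at h1
  exact h1

lemma hpyp_comm : (aeval (wX F) h ^ p * wY F ^ p) * wX F
    = wX F * (aeval (wX F) h ^ p * wY F ^ p) := by
  rw [mul_assoc, yp_x F p, ← mul_assoc, ← map_pow, ← (x_commute_aeval F (h ^ p)).eq, map_pow,
    mul_assoc]

end Easy


set_option maxHeartbeats 1000000 in
/-- In characteristic `p > 0`, the centralizer of `x` in `A_h ⊆ A₁` equals
`F[x, hᵖyᵖ] = ⊕_{p ∣ i} F[x]·hⁱyⁱ`. -/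
theorem stmt12 (F : Type) [Field F] (p : ℕ) [Fact p.Prime] [CharP F p]
    (h : F[X]) (hh : h ≠ 0) :
    ({a : Weyl F | a ∈ Ahsub F h ∧ a * wX F = wX F * a} =
      ↑(Algebra.adjoin F {wX F, aeval (wX F) h ^ p * wY F ^ p})) ∧
    ({a : Weyl F | a ∈ Ahsub F h ∧ a * wX F = wX F * a} =
      ↑(Submodule.span F {z : Weyl F | ∃ (i : ℕ) (r : F[X]),
          z = aeval (wX F) r * (aeval (wX F) h ^ (p * i) * wY F ^ (p * i))})) := by
  have incl1 : (Algebra.adjoin F {wX F, aeval (wX F) h ^ p * wY F ^ p} : Set (Weyl F)) ⊆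
      {a : Weyl F | a ∈ Ahsub F h ∧ a * wX F = wX F * a} := by
    intro a ha
    rw [SetLike.mem_coe] at ha
    constructor
    · refine Algebra.adjoin_le ?_ ha
      rintro z (rfl | hz)
      · exact wX_mem F h
      · rw [Set.mem_singleton_iff] at hz
        subst hz
        exact hpyp_mem F p h
    · have h1 : a ∈ Subalgebra.centralizer F {wX F} := by
        refine Algebra.adjoin_le ?_ ha
        rintro z (rfl | hz)
        · rw [SetLike.mem_coe, Subalgebra.mem_centralizer_iff]
          rintro g (rfl : g = wX F)
          rfl
        · rw [Set.mem_singleton_iff] at hz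
          subst hz
          rw [SetLike.mem_coe, Subalgebra.mem_centralizer_iff]
          rintro g (rfl : g = wX F)
          exact (hpyp_comm F p h).symm
      exact ((Subalgebra.mem_centralizer_iff F).mp h1 (wX F) rfl).symm
  have incl3 : Submodule.span F {z : Weyl F | ∃ (i : ℕ) (r : Polynomial F),
        z = aeval (wX F) r * (aeval (wX F) h ^ (p * i) * wY F ^ (p * i))}
      ≤ Subalgebra.toSubmodule (Algebra.adjoin F {wX F, aeval (wX F) h ^ p * wY F ^ p}) := by
    rw [Submodule.span_le]
    rintro z ⟨i, r, rfl⟩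
    rw [SetLike.mem_coe, Subalgebra.mem_toSubmodule]
    refine mul_mem ?_ ?_
    · have h2 : aeval (wX F) r ∈ Algebra.adjoin F {wX F} := by
        rw [Algebra.adjoin_singleton_eq_range_aeval]
        exact ⟨r, rfl⟩
      exact Algebra.adjoin_mono (Set.singleton_subset_iff.mpr (Set.mem_insert _ _)) h2
    · rw [← hpyp_pow F p h i]
      refine Subalgebra.pow_mem _ ?_ i
      exact Algebra.subset_adjoin (Set.mem_insert_of_mem _ rfl)
  constructor
  · ext a
    constructor
    · rintro ⟨hA, hC⟩
      have h2 := incl3 (hard F p h hA hh hC)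
      rwa [Subalgebra.mem_toSubmodule] at h2
    · exact fun ha => incl1 ha
  · ext a
    constructor
    · rintro ⟨hA, hC⟩
      exact hard F p h hA hh hC
    · intro ha
      rw [SetLike.mem_coe] at ha
      have h2 := incl3 ha
      rw [Subalgebra.mem_toSubmodule] at h2
      exact incl1 h2
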